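/- Let (|v_m⟩)_{m=1}^D be unit vectors in ℂ^d with Σ_{m=1}^D |v_m⟩⟨v_m| = (D/d)·1. For δ > 0, z ∈ {0,1}^D, and e_m the m-th standard basis vector of {0,1}^D, define E_{δ,z} = (e^{δ/2}/(e^{δ/2}+1))^D · (d/D) · Σ_{m=1}^D e^{−(δ/2)‖z − e_m‖₁} |v_m⟩⟨v_m|. Then each E_{δ,z} is positive semidefinite and Σ_{z∈{0,1}^D} E_{δ,z} = 1, i.e. (E_{δ,z})_z forms a POVM. -/

import Mathlib

open Matrix BigOperators ComplexOrder

/-- Hamming distance between z ∈ {0,1}^D and the m-th standard basis vector e_m. -/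
def hammingToBasis {D : ℕ} (z : Fin D → Bool) (m : Fin D) : ℕ :=
  (Finset.univ.filter (fun i => z i ≠ decide (i = m))).card

/-- The noisy 2-design POVM element E_{δ,z}. -/
noncomputable def noisyPOVMElement {d D : ℕ} (v : Fin D → (Fin d → ℂ)) (δ : ℝ)
    (z : Fin D → Bool) : Matrix (Fin d) (Fin d) ℂ :=
  (((Real.exp (δ / 2) / (Real.exp (δ / 2) + 1)) ^ D * (d / D) : ℝ) : ℂ) •
    ∑ m, ((Real.exp (-(δ / 2) * (hammingToBasis z m)) : ℝ) : ℂ) •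
      Matrix.vecMulVec (v m) (star (v m))

/-! Each `E_{δ,z}` is a nonnegative combination of the projectors `|v_m⟩⟨v_m|`, hence positive
semidefinite. Summed over `z`, the weight of `|v_m⟩⟨v_m|` factorizes over the coordinates:
`Σ_z e^{-(δ/2)‖z - e_m‖₁} = (1 + e^{-δ/2})^D`, which cancels the prefactor
`(e^{δ/2}/(e^{δ/2}+1))^D`; the frame condition then turns `(d/D) Σ_m |v_m⟩⟨v_m|` into `1`. -/

theorem sum_pow_hammingDist {ι β R : Type*} [Fintype ι] [DecidableEq ι] [Fintype β]
    [DecidableEq β] [CommSemiring R] (f : ι → β) (t : R) :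
    ∑ z : ι → β, t ^ hammingDist z f = (1 + (Fintype.card β - 1) • t) ^ Fintype.card ι := by
  have hprod (z : ι → β) : t ^ hammingDist z f = ∏ i, if z i = f i then 1 else t := by
    simp [hammingDist, Finset.prod_ite, Finset.prod_const]
  have hfactor (i : ι) : ∑ b : β, (if b = f i then 1 else t) = 1 + (Fintype.card β - 1) • t := by
    rw [Finset.sum_ite, Finset.filter_eq', Finset.filter_ne', Finset.sum_const, Finset.sum_const,
      Finset.card_erase_of_mem (Finset.mem_univ _)]
    simp
  simp_rw [hprod]
  rw [← Fintype.prod_sum (fun i b => if b = f i then 1 else t)]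
  simp_rw [hfactor, Finset.prod_const, Finset.card_univ]

theorem hammingToBasis_eq_hammingDist {D : ℕ} (z : Fin D → Bool) (m : Fin D) :
    hammingToBasis z m = hammingDist z (fun i => decide (i = m)) :=
  rfl

theorem sum_exp_neg_mul_hammingToBasis (D : ℕ) (a : ℝ) (m : Fin D) :
    ∑ z : Fin D → Bool, Real.exp (-a * hammingToBasis z m) = (1 + Real.exp (-a)) ^ D := by
  simp_rw [mul_comm (-a), Real.exp_nat_mul, hammingToBasis_eq_hammingDist]
  simpa using sum_pow_hammingDist (fun i : Fin D => decide (i = m)) (Real.exp (-a))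

theorem exp_div_exp_add_one_mul_one_add_exp_neg (a : ℝ) :
    Real.exp a / (Real.exp a + 1) * (1 + Real.exp (-a)) = 1 := by
  rw [div_mul_eq_mul_div, mul_add, mul_one, ← Real.exp_add, add_neg_cancel, Real.exp_zero,
    add_comm, div_self (by positivity)]

theorem noisyPOVMElement_posSemidef {d D : ℕ} (v : Fin D → Fin d → ℂ) (δ : ℝ)
    (z : Fin D → Bool) : (noisyPOVMElement v δ z).PosSemidef := by
  refine PosSemidef.smul (posSemidef_sum _ fun m _ => ?_)
    (Complex.zero_le_real.mpr (by positivity))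
  exact (posSemidef_vecMulVec_self_star (v m)).smul
    (Complex.zero_le_real.mpr (Real.exp_nonneg _))

theorem sum_noisyPOVMElement {d D : ℕ} (v : Fin D → Fin d → ℂ) (δ : ℝ) :
    ∑ z, noisyPOVMElement v δ z = (((d : ℝ) / D : ℝ) : ℂ) • ∑ m, vecMulVec (v m) (star (v m)) := by
  simp only [noisyPOVMElement]
  rw [← Finset.smul_sum, Finset.sum_comm]
  simp_rw [← Finset.sum_smul, ← Complex.ofReal_sum, sum_exp_neg_mul_hammingToBasis]
  rw [← Finset.smul_sum, smul_smul, ← Complex.ofReal_mul, mul_right_comm, ← mul_pow,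
    exp_div_exp_add_one_mul_one_add_exp_neg, one_pow, one_mul]

theorem noisy_two_design_is_povm
    {d D : ℕ} (hd : 0 < d) (hD : 0 < D)
    (v : Fin D → (Fin d → ℂ))
    (hres : ∑ m, Matrix.vecMulVec (v m) (star (v m))
      = (((D : ℝ) / d : ℝ) : ℂ) • (1 : Matrix (Fin d) (Fin d) ℂ))
    (δ : ℝ) :
    (∀ z : Fin D → Bool, (noisyPOVMElement v δ z).PosSemidef) ∧
      ∑ z : Fin D → Bool, noisyPOVMElement v δ z = 1 := by
  refine ⟨noisyPOVMElement_posSemidef v δ, ?_⟩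
  have hnorm : (d : ℝ) / D * (D / d) = 1 := by field_simp
  rw [sum_noisyPOVMElement, hres, smul_smul, ← Complex.ofReal_mul, hnorm, Complex.ofReal_one,
    one_smul]
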